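/- Assume ∂κ/∂u and ∂²κ/∂u² exist and are continuous on Ω, let f be bounded on [a,b], let δ₀ > 0 and let φ : [a,b] → ℝ be bounded; set C₆ = sup{|∂²κ/∂u²(s,t,u)| : s,t ∈ [a,b], |u| ≤ ‖φ‖_∞ + δ₀}. Suppose φ_m ∈ B(φ,δ₀) is a bounded solution of x − K_m(x) = f and z ∈ B(φ,δ₀) is bounded, and set z̃ = K_m(z) + f. Then ‖z̃ − φ_m − K_m'(φ_m)(z − φ_m)‖_∞ ≤ (C₆·(b−a)·W/2) · ‖z − φ_m‖_∞². In particular, if ‖z − φ_m‖_∞ ≤ c·max{h̃^d, h^{3r}} for some constant c and reals h̃, h > 0 and integers d, then ‖z̃ − φ_m − K_m'(φ_m)(z − φ_m)‖_∞ ≤ (C₆·(b−a)·W/2)·c²·(max{h̃^d, h^{3r}})². -/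

import Mathlib

open Set

noncomputable section

/-- Supremum of `|x|` over `[a, b]`. -/
def supIcc (a b : ℝ) (x : ℝ → ℝ) : ℝ := ⨆ t : Set.Icc a b, |x t.1|

/-- `x` is bounded on `[a, b]`. -/
def BddIcc (a b : ℝ) (x : ℝ → ℝ) : Prop := ∃ M, ∀ t ∈ Set.Icc a b, |x t| ≤ M

/-- The quadrature rule `(w, μ)` on `[0,1]` has degree of precision at least `k`:
it integrates exactly all polynomials of degree at most `k`. -/
def Precision {ρ : ℕ} (w μ : Fin ρ → ℝ) (k : ℕ) : Prop :=
  ∀ P : Polynomial ℝ, P.natDegree ≤ k →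
    ∑ i, w i * P.eval (μ i) = ∫ t in (0:ℝ)..1, P.eval t

/-- `Ψ(t) = ∏ i (t - q i)`. -/
def Psi {r : ℕ} (q : Fin r → ℝ) (t : ℝ) : ℝ := ∏ i, (t - q i)

/-- `q` lists the Gauss points of order `r` in `(0,1)`. -/
def GaussPts {r : ℕ} (q : Fin r → ℝ) : Prop :=
  StrictMono q ∧ (∀ i, q i ∈ Set.Ioo (0:ℝ) 1) ∧
    ∀ j, j < r → ∫ t in (0:ℝ)..1, t ^ j * Psi q t = 0

/-- Quadrature nodes `ζ_i^{j+1}` of the composite rule, `j = 0, …, m-1`. -/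
def qNode {ρ : ℕ} (a b : ℝ) (μ : Fin ρ → ℝ) (m j : ℕ) (i : Fin ρ) : ℝ :=
  a + (j : ℝ) * ((b - a) / m) + μ i * ((b - a) / m)

/-- Nyström operator, linear kernel. -/
def nystL {ρ : ℕ} (a b : ℝ) (w μ : Fin ρ → ℝ) (m : ℕ) (κ : ℝ → ℝ → ℝ) (x : ℝ → ℝ) :
    ℝ → ℝ := fun s =>
  ((b - a) / m) *
    ∑ j ∈ Finset.range m, ∑ i, w i * κ s (qNode a b μ m j i) * x (qNode a b μ m j i)

/-- Nyström operator, Urysohn kernel. -/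
def nystU {ρ : ℕ} (a b : ℝ) (w μ : Fin ρ → ℝ) (m : ℕ) (κ : ℝ → ℝ → ℝ → ℝ) (x : ℝ → ℝ) :
    ℝ → ℝ := fun s =>
  ((b - a) / m) *
    ∑ j ∈ Finset.range m, ∑ i, w i * κ s (qNode a b μ m j i) (x (qNode a b μ m j i))

/-- Fréchet derivative `K_m'(x) v` of the Nyström operator. -/
def nystU' {ρ : ℕ} (a b : ℝ) (w μ : Fin ρ → ℝ) (m : ℕ) (κ : ℝ → ℝ → ℝ → ℝ) (x v : ℝ → ℝ) :
    ℝ → ℝ := fun s =>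
  ((b - a) / m) *
    ∑ j ∈ Finset.range m, ∑ i,
      w i * deriv (κ s (qNode a b μ m j i)) (x (qNode a b μ m j i)) * v (qNode a b μ m j i)

/-- Collocation nodes `τ_i^{k+1}`, `k = 0, …, n-1`. -/
def cNode {r : ℕ} (a b : ℝ) (q : Fin r → ℝ) (n k : ℕ) (i : Fin r) : ℝ :=
  a + (k : ℝ) * ((b - a) / n) + q i * ((b - a) / n)

/-- Index of the subinterval of the uniform partition of `[a,b]` containing `t`. -/
def iIdx (a b : ℝ) (n : ℕ) (t : ℝ) : ℕ :=
  min (n - 1) (⌊(t - a) / ((b - a) / n)⌋.toNat)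

/-- Piecewise-polynomial interpolatory projection at the `r` Gauss points of each
subinterval of the uniform partition of `[a,b]` into `n` parts. -/
def projQ {r : ℕ} (a b : ℝ) (q : Fin r → ℝ) (n : ℕ) (x : ℝ → ℝ) : ℝ → ℝ := fun t =>
  (Lagrange.interpolate Finset.univ (cNode a b q n (iIdx a b n t))
    fun i => x (cNode a b q n (iIdx a b n t) i)).eval t

/-- Discrete modified projection operator, linear case. -/
def modL {ρ r : ℕ} (a b : ℝ) (w μ : Fin ρ → ℝ) (q : Fin r → ℝ) (n m : ℕ)
    (κ : ℝ → ℝ → ℝ) (x : ℝ → ℝ) : ℝ → ℝ :=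
  projQ a b q n (nystL a b w μ m κ x) + nystL a b w μ m κ (projQ a b q n x)
    - projQ a b q n (nystL a b w μ m κ (projQ a b q n x))

/-- Discrete modified projection operator, Urysohn case. -/
def modU {ρ r : ℕ} (a b : ℝ) (w μ : Fin ρ → ℝ) (q : Fin r → ℝ) (n m : ℕ)
    (κ : ℝ → ℝ → ℝ → ℝ) (x : ℝ → ℝ) : ℝ → ℝ :=
  projQ a b q n (nystU a b w μ m κ x) + nystU a b w μ m κ (projQ a b q n x)
    - projQ a b q n (nystU a b w μ m κ (projQ a b q n x))

/-- Fréchet derivative of `modU` at `x`, applied to `v`. -/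
def modU' {ρ r : ℕ} (a b : ℝ) (w μ : Fin ρ → ℝ) (q : Fin r → ℝ) (n m : ℕ)
    (κ : ℝ → ℝ → ℝ → ℝ) (x v : ℝ → ℝ) : ℝ → ℝ :=
  projQ a b q n (nystU' a b w μ m κ x v)
    + nystU' a b w μ m κ (projQ a b q n x) (projQ a b q n v)
    - projQ a b q n (nystU' a b w μ m κ (projQ a b q n x) (projQ a b q n v))

/-- `‖x‖_{k,∞}`. -/
def CkNorm (a b : ℝ) (k : ℕ) (x : ℝ → ℝ) : ℝ :=
  ⨆ p : Fin (k + 1) × Set.Icc a b, |iteratedDeriv (p.1 : ℕ) x p.2.1|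

/-- Mixed partial derivative `∂^{i+j} κ / ∂s^i ∂t^j`. -/
def pder (i j : ℕ) (κ : ℝ → ℝ → ℝ) (s t : ℝ) : ℝ :=
  iteratedDeriv i (fun s' => iteratedDeriv j (κ s') t) s

/-- `‖κ‖_{k,∞}`. -/
def kerNorm (a b : ℝ) (k : ℕ) (κ : ℝ → ℝ → ℝ) : ℝ :=
  ⨆ p : {ij : ℕ × ℕ // ij.1 + ij.2 ≤ k} × (Set.Icc a b × Set.Icc a b),
    |pder p.1.1.1 p.1.1.2 κ p.2.1.1 p.2.2.1|

/-- `W = ∑ |w i|`. -/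
def Wsum {ρ : ℕ} (w : Fin ρ → ℝ) : ℝ := ∑ i, |w i|

/-- `∂κ/∂u`, Urysohn kernel. -/
def du (κ : ℝ → ℝ → ℝ → ℝ) (s t u : ℝ) : ℝ := deriv (κ s t) u

/-- `∂²κ/∂u²`, Urysohn kernel. -/
def du2 (κ : ℝ → ℝ → ℝ → ℝ) (s t u : ℝ) : ℝ := deriv (deriv (κ s t)) u

/-- supremum of `|g(s,t,u)|` over `s, t ∈ [a,b]`, `|u| ≤ B`. -/
def supU (a b B : ℝ) (g : ℝ → ℝ → ℝ → ℝ) : ℝ :=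
  ⨆ v : Set.Icc a b × Set.Icc a b × Set.Icc (-B) B, |g v.1.1 v.2.1.1 v.2.2.1|

/-- `∂κ/∂u` exists everywhere and is continuous. -/
def Smooth1 (κ : ℝ → ℝ → ℝ → ℝ) : Prop :=
  (∀ s t : ℝ, Differentiable ℝ (κ s t)) ∧
    Continuous fun v : ℝ × ℝ × ℝ => du κ v.1 v.2.1 v.2.2

/-- `∂²κ/∂u²` exists everywhere and is continuous. -/
def Smooth2 (κ : ℝ → ℝ → ℝ → ℝ) : Prop :=
  (∀ s t : ℝ, Differentiable ℝ (deriv (κ s t))) ∧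
    Continuous fun v : ℝ × ℝ × ℝ => du2 κ v.1 v.2.1 v.2.2


/-!
Since `φm` is a fixed point of `x ↦ K_m x + f`, the residual `z̃ - φm - K_m'(φm)(z - φm)` equals
`K_m z - K_m φm - K_m'(φm)(z - φm)`, a quadrature sum of first-order Taylor remainders of
`u ↦ κ(s, ζ, u)` between `φm ζ` and `z ζ`. Both values lie in `[-(‖φ‖ + δ₀), ‖φ‖ + δ₀]`, so by the
Lagrange form each remainder is at most `C₆ / 2 * ‖z - φm‖²`, and the weights `h̃ |w i|` add up to
`(b - a) W`.
-/

theorem abs_sub_sub_deriv_mul_le {g : ℝ → ℝ} (hg : ContDiff ℝ 2 g) {u v C : ℝ}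
    (hC : ∀ x ∈ uIcc u v, |deriv (deriv g) x| ≤ C) :
    |g v - g u - deriv g u * (v - u)| ≤ C / 2 * (v - u) ^ 2 := by
  rcases eq_or_ne u v with rfl | huv
  · simp
  obtain ⟨x, hx, hrem⟩ := taylor_mean_remainder_lagrange_iteratedDeriv huv hg.contDiffOn
  have htaylor : taylorWithinEval g 1 (uIcc u v) u v = g u + deriv g u * (v - u) := by
    have hdiff : derivWithin g (uIcc u v) u = deriv g u :=
      (hg.differentiable two_ne_zero u).derivWithin
        (uniqueDiffOn_uIcc huv u left_mem_uIcc)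
    simp [taylorWithinEval_succ, hdiff, mul_comm]
  calc |g v - g u - deriv g u * (v - u)|
      = |deriv (deriv g) x| / 2 * (v - u) ^ 2 := by
        rw [sub_sub, ← htaylor, hrem, iteratedDeriv_succ, iteratedDeriv_one]
        simp [abs_div, abs_mul, Nat.factorial, mul_div_right_comm]
    _ ≤ C / 2 * (v - u) ^ 2 := by gcongr; exact hC x (uIoo_subset_uIcc_self hx)

theorem contDiff_two_of_smooth {κ : ℝ → ℝ → ℝ → ℝ} (h1 : Smooth1 κ) (h2 : Smooth2 κ) (s t : ℝ) :
    ContDiff ℝ 2 (κ s t) := by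
  have hcont : Continuous (deriv (deriv (κ s t))) :=
    h2.2.comp (continuous_const.prodMk (continuous_const.prodMk continuous_id))
  exact contDiff_succ_iff_deriv.mpr
    ⟨h1.1 s t, by simp, contDiff_one_iff_deriv.mpr ⟨h2.1 s t, hcont⟩⟩

theorem BddIcc.sub {a b : ℝ} {x y : ℝ → ℝ} (hx : BddIcc a b x) (hy : BddIcc a b y) :
    BddIcc a b (x - y) := by
  obtain ⟨M, hM⟩ := hx
  obtain ⟨N, hN⟩ := hy
  exact ⟨M + N, fun t ht => (abs_sub _ _).trans (add_le_add (hM t ht) (hN t ht))⟩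

theorem abs_le_supIcc {a b : ℝ} {x : ℝ → ℝ} (hx : BddIcc a b x) {t : ℝ} (ht : t ∈ Icc a b) :
    |x t| ≤ supIcc a b x := by
  obtain ⟨M, hM⟩ := hx
  exact le_ciSup (f := fun t : Icc a b => |x t|) ⟨M, by rintro _ ⟨t, rfl⟩; exact hM t t.2⟩ ⟨t, ht⟩

theorem abs_le_supIcc_add {a b δ : ℝ} {φ x : ℝ → ℝ} (hφ : BddIcc a b φ)
    (hx : ∀ t ∈ Icc a b, |x t - φ t| ≤ δ) {t : ℝ} (ht : t ∈ Icc a b) :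
    |x t| ≤ supIcc a b φ + δ :=
  calc |x t| ≤ |φ t| + |x t - φ t| := sub_le_iff_le_add'.mp (abs_sub_abs_le_abs_sub _ _)
    _ ≤ supIcc a b φ + δ := add_le_add (abs_le_supIcc hφ ht) (hx t ht)

theorem abs_le_supU {a b B : ℝ} {g : ℝ → ℝ → ℝ → ℝ}
    (hg : Continuous fun v : ℝ × ℝ × ℝ => g v.1 v.2.1 v.2.2)
    {s t u : ℝ} (hs : s ∈ Icc a b) (ht : t ∈ Icc a b) (hu : u ∈ Icc (-B) B) :
    |g s t u| ≤ supU a b B g := by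
  have hK : IsCompact (Icc a b ×ˢ Icc a b ×ˢ Icc (-B) B) :=
    isCompact_Icc.prod (isCompact_Icc.prod isCompact_Icc)
  obtain ⟨M, hM⟩ := hK.exists_bound_of_continuousOn hg.continuousOn
  refine le_ciSup (f := fun v : Icc a b × Icc a b × Icc (-B) B => |g v.1 v.2.1 v.2.2|)
    ⟨M, ?_⟩ (⟨s, hs⟩, ⟨t, ht⟩, ⟨u, hu⟩)
  rintro _ ⟨v, rfl⟩
  exact hM (v.1, v.2.1, v.2.2) ⟨v.1.2, v.2.1.2, v.2.2.2⟩

theorem qNode_mem_Icc {ρ : ℕ} {a b : ℝ} (hab : a ≤ b) {μ : Fin ρ → ℝ}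
    (hμ : ∀ i, μ i ∈ Icc (0:ℝ) 1) {m j : ℕ} (hj : j < m) (i : Fin ρ) :
    qNode a b μ m j i ∈ Icc a b := by
  have hm : (0:ℝ) < m := Nat.cast_pos.mpr (by omega)
  have hj' : (j : ℝ) + 1 ≤ m := by exact_mod_cast hj
  obtain ⟨hμ0, hμ1⟩ := hμ i
  have hnode : qNode a b μ m j i = a + (j + μ i) / m * (b - a) := by
    unfold qNode; field_simp; ring
  rw [hnode]
  constructor
  · have : 0 ≤ (j + μ i) / m := by positivity
    nlinarith
  · have : (j + μ i) / m ≤ 1 := (div_le_one hm).mpr (by linarith)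
    nlinarith

section Nystrom

variable {ρ : ℕ} {a b : ℝ} {w μ : Fin ρ → ℝ} {m : ℕ} {κ : ℝ → ℝ → ℝ → ℝ}

theorem nystU_sub_nystU_sub_nystU' (x z : ℝ → ℝ) (s : ℝ) :
    nystU a b w μ m κ z s - nystU a b w μ m κ x s - nystU' a b w μ m κ x (z - x) s =
      (b - a) / m * ∑ j ∈ Finset.range m, ∑ i, w i *
        (κ s (qNode a b μ m j i) (z (qNode a b μ m j i))
          - κ s (qNode a b μ m j i) (x (qNode a b μ m j i))
          - deriv (κ s (qNode a b μ m j i)) (x (qNode a b μ m j i))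
            * (z (qNode a b μ m j i) - x (qNode a b μ m j i))) := by
  simp only [nystU, nystU', Pi.sub_apply, ← mul_sub, ← Finset.sum_sub_distrib]
  congr 1
  refine Finset.sum_congr rfl fun j _ => Finset.sum_congr rfl fun i _ => ?_
  ring

theorem abs_composite_sum_le (hab : a ≤ b) (hm : m ≠ 0) {T : ℕ → Fin ρ → ℝ} {E : ℝ}
    (hT : ∀ j < m, ∀ i, |T j i| ≤ E) :
    |(b - a) / m * ∑ j ∈ Finset.range m, ∑ i, w i * T j i| ≤ (b - a) * Wsum w * E := by
  have hsum : |∑ j ∈ Finset.range m, ∑ i, w i * T j i| ≤ m * (Wsum w * E) := by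
    calc |∑ j ∈ Finset.range m, ∑ i, w i * T j i|
        ≤ ∑ j ∈ Finset.range m, ∑ i, |w i| * E := by
          refine (Finset.abs_sum_le_sum_abs _ _).trans (Finset.sum_le_sum fun j hj => ?_)
          refine (Finset.abs_sum_le_sum_abs _ _).trans (Finset.sum_le_sum fun i _ => ?_)
          rw [abs_mul]
          exact mul_le_mul_of_nonneg_left (hT j (Finset.mem_range.mp hj) i) (abs_nonneg _)
      _ = m * (Wsum w * E) := by simp [Wsum, Finset.sum_mul]
  have hm' : (0:ℝ) < m := Nat.cast_pos.mpr (Nat.pos_of_ne_zero hm)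
  calc |(b - a) / m * ∑ j ∈ Finset.range m, ∑ i, w i * T j i|
      = (b - a) / m * |∑ j ∈ Finset.range m, ∑ i, w i * T j i| := by
        rw [abs_mul, abs_of_nonneg (div_nonneg (sub_nonneg.mpr hab) hm'.le)]
    _ ≤ (b - a) / m * (m * (Wsum w * E)) := by gcongr
    _ = (b - a) * Wsum w * E := by field_simp

theorem abs_nystU_sub_nystU_sub_nystU'_le (hab : a ≤ b) (hμ : ∀ i, μ i ∈ Icc (0:ℝ) 1)
    (hm : m ≠ 0) (h1 : Smooth1 κ) (h2 : Smooth2 κ) {x z : ℝ → ℝ} {B N : ℝ}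
    (hx : ∀ t ∈ Icc a b, |x t| ≤ B) (hz : ∀ t ∈ Icc a b, |z t| ≤ B)
    (hN : ∀ t ∈ Icc a b, |z t - x t| ≤ N) {s : ℝ} (hs : s ∈ Icc a b) :
    |nystU a b w μ m κ z s - nystU a b w μ m κ x s - nystU' a b w μ m κ x (z - x) s| ≤
      supU a b B (du2 κ) * (b - a) * Wsum w / 2 * N ^ 2 := by
  rw [nystU_sub_nystU_sub_nystU']
  refine (abs_composite_sum_le (E := supU a b B (du2 κ) / 2 * N ^ 2) hab hm
    fun j hj i => ?_).trans_eq (by ring)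
  have hζ := qNode_mem_Icc hab hμ hj i
  set ζ := qNode a b μ m j i
  have hC : ∀ u ∈ uIcc (x ζ) (z ζ), |deriv (deriv (κ s ζ)) u| ≤ supU a b B (du2 κ) :=
    fun u hu => abs_le_supU h2.2 hs hζ
      (uIcc_subset_Icc (abs_le.mp (hx ζ hζ)) (abs_le.mp (hz ζ hζ)) hu)
  calc _ ≤ supU a b B (du2 κ) / 2 * (z ζ - x ζ) ^ 2 :=
        abs_sub_sub_deriv_mul_le (contDiff_two_of_smooth h1 h2 s ζ) hC
    _ ≤ supU a b B (du2 κ) / 2 * N ^ 2 := by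
        have hC0 : 0 ≤ supU a b B (du2 κ) := (abs_nonneg _).trans (hC _ left_mem_uIcc)
        gcongr _ * ?_
        exact sq_le_sq.mpr ((hN ζ hζ).trans (le_abs_self N))

end Nystrom

theorem stmt12_general {ρ : ℕ} (w μ : Fin ρ → ℝ) (hμ : ∀ i, μ i ∈ Set.Ioo (0:ℝ) 1)
    (a b : ℝ) (hab : a < b) (κ : ℝ → ℝ → ℝ → ℝ)
    (h1 : Smooth1 κ) (h2 : Smooth2 κ)
    (f : ℝ → ℝ)
    (δ₀ : ℝ) (φ : ℝ → ℝ) (hφ : BddIcc a b φ)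
    (m : ℕ) (hm : 1 ≤ m)
    (φm : ℝ → ℝ) (hφmB : ∀ t ∈ Set.Icc a b, |φm t - φ t| ≤ δ₀) (hφmb : BddIcc a b φm)
    (hfix : ∀ s, φm s - nystU a b w μ m κ φm s = f s)
    (z : ℝ → ℝ) (hzB : ∀ t ∈ Set.Icc a b, |z t - φ t| ≤ δ₀) (hzb : BddIcc a b z) :
    (∀ s ∈ Set.Icc a b,
      |(nystU a b w μ m κ z s + f s) - φm s - nystU' a b w μ m κ φm (z - φm) s| ≤
        supU a b (supIcc a b φ + δ₀) (du2 κ) * (b - a) * Wsum w / 2 *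
          supIcc a b (z - φm) ^ 2) ∧
    ∀ (c hq hh : ℝ), 0 < hq → 0 < hh → ∀ dd : ℤ, ∀ rr : ℕ,
      supIcc a b (z - φm) ≤ c * max (hq ^ dd) (hh ^ (3 * rr)) →
      ∀ s ∈ Set.Icc a b,
        |(nystU a b w μ m κ z s + f s) - φm s - nystU' a b w μ m κ φm (z - φm) s| ≤
          supU a b (supIcc a b φ + δ₀) (du2 κ) * (b - a) * Wsum w / 2 *
            (c ^ 2 * max (hq ^ dd) (hh ^ (3 * rr)) ^ 2) := by
  have ha : a ∈ Icc a b := left_mem_Icc.mpr hab.le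
  have hφm_le := fun t (ht : t ∈ Icc a b) => abs_le_supIcc_add hφ hφmB ht
  have hz_le := fun t (ht : t ∈ Icc a b) => abs_le_supIcc_add hφ hzB ht
  have hestimate : ∀ s ∈ Icc a b,
      |(nystU a b w μ m κ z s + f s) - φm s - nystU' a b w μ m κ φm (z - φm) s| ≤
        supU a b (supIcc a b φ + δ₀) (du2 κ) * (b - a) * Wsum w / 2 *
          supIcc a b (z - φm) ^ 2 := by
    intro s hs
    have hresidual : nystU a b w μ m κ z s + f s - φm s =
        nystU a b w μ m κ z s - nystU a b w μ m κ φm s := by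
      rw [← hfix s]; ring
    rw [hresidual]
    exact abs_nystU_sub_nystU_sub_nystU'_le hab.le (fun i => Ioo_subset_Icc_self (hμ i))
      (by omega) h1 h2 hφm_le hz_le (fun t ht => abs_le_supIcc (hzb.sub hφmb) ht) hs
  refine ⟨hestimate, fun c hq hh _ _ dd rr hle s hs => (hestimate s hs).trans ?_⟩
  have hC₆ : 0 ≤ supU a b (supIcc a b φ + δ₀) (du2 κ) :=
    (abs_nonneg _).trans (abs_le_supU h2.2 ha ha (abs_le.mp (hφm_le a ha)))
  have hW : 0 ≤ Wsum w := Finset.sum_nonneg fun i _ => abs_nonneg _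
  have hN : 0 ≤ supIcc a b (z - φm) := (abs_nonneg _).trans (abs_le_supIcc (hzb.sub hφmb) ha)
  rw [← mul_pow]
  gcongr

/-- Proposition 5.1. -/
theorem stmt12 {ρ : ℕ} (w μ : Fin ρ → ℝ) (hμ : ∀ i, μ i ∈ Set.Ioo (0:ℝ) 1)
    (a b : ℝ) (hab : a < b) (κ : ℝ → ℝ → ℝ → ℝ)
    (hκ : Continuous fun v : ℝ × ℝ × ℝ => κ v.1 v.2.1 v.2.2)
    (h1 : Smooth1 κ) (h2 : Smooth2 κ)
    (f : ℝ → ℝ) (hfb : BddIcc a b f)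
    (δ₀ : ℝ) (hδ₀ : 0 < δ₀) (φ : ℝ → ℝ) (hφ : BddIcc a b φ)
    (m : ℕ) (hm : 1 ≤ m)
    (φm : ℝ → ℝ) (hφmB : ∀ t ∈ Set.Icc a b, |φm t - φ t| ≤ δ₀) (hφmb : BddIcc a b φm)
    (hfix : ∀ s, φm s - nystU a b w μ m κ φm s = f s)
    (z : ℝ → ℝ) (hzB : ∀ t ∈ Set.Icc a b, |z t - φ t| ≤ δ₀) (hzb : BddIcc a b z) :
    (∀ s ∈ Set.Icc a b,
      |(nystU a b w μ m κ z s + f s) - φm s - nystU' a b w μ m κ φm (z - φm) s| ≤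
        supU a b (supIcc a b φ + δ₀) (du2 κ) * (b - a) * Wsum w / 2 *
          supIcc a b (z - φm) ^ 2) ∧
    ∀ (c hq hh : ℝ), 0 < hq → 0 < hh → ∀ dd : ℤ, ∀ rr : ℕ,
      supIcc a b (z - φm) ≤ c * max (hq ^ dd) (hh ^ (3 * rr)) →
      ∀ s ∈ Set.Icc a b,
        |(nystU a b w μ m κ z s + f s) - φm s - nystU' a b w μ m κ φm (z - φm) s| ≤
          supU a b (supIcc a b φ + δ₀) (du2 κ) * (b - a) * Wsum w / 2 *
            (c ^ 2 * max (hq ^ dd) (hh ^ (3 * rr)) ^ 2) :=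
  stmt12_general w μ hμ a b hab κ h1 h2 f δ₀ φ hφ m hm φm hφmB hφmb hfix z hzB hzb

end
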